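/- Fix x ∈ ℝ and t > 0 such that the minimizer y(x,t) of y ↦ (x−y)²/(2t) − log 2 − log cosh y is unique. Define u_N(x,t) = [ ∫_ℝ ((x−y)/t) · exp( −N( (x−y)²/(2t) − log 2 − log cosh y ) ) dy ] / [ ∫_ℝ exp( −N( (x−y)²/(2t) − log 2 − log cosh y ) ) dy ] and u(x,t) = (x − y(x,t))/t. Then there exists a constant C = C(x,t) > 0 such that |u_N(x,t) − u(x,t)| ≤ C/√N for all integers N ≥ 1. -/

import Mathlib

/-!
Write `F = cwFreeEnergy x t` and `s` for its minimiser. Since `(x - y)/t = (x - s)/t - (y - s)/t`,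
the error is `t⁻¹` times the Gibbs mean of `y - s` under `exp (-N F)`. If
`c (y - s)² ≤ F y - F s` everywhere and `F y - F s ≤ A (y - s)²` near `s`, then
`∫ |y - s| exp (-N (F y - F s)) ≤ (N c)⁻¹` while the partition function
`∫ exp (-N (F y - F s))` is at least `2 e^{-A} / √N`, so the error is `O(1/√N)`.

For the quadratic growth, `F y - F s = (y - s)²/(2t) - D y` where `D` is the Bregman divergence
of `log cosh` at `s`; it satisfies `D y = sech² s (y - s)²/2 + O(|y - s|³)` and
`|D y| ≤ 2 |y - s|`. Hence the growth is quadratic near `s` once `sech² s < 1/t`, far from `s` in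
any case, and in between by compactness and uniqueness of the minimiser. Minimality gives
`sech² s ≤ 1/t`. Equality is impossible for `s ≠ 0`, where it would force `F 0 < F s`, and for
`s = 0` it means `t = 1` and `x = 0`: then `F` is even, so `s = 0` by uniqueness and the numerator
vanishes by oddness.
-/

open Real MeasureTheory Set Filter

theorem abs_sub_le_mul_abs_sub_pow {f f' : ℝ → ℝ} {s K : ℝ} {n : ℕ}
    (hf : ∀ z, HasDerivAt f (f' z) z) (hf' : ∀ z, |f' z| ≤ K * |z - s| ^ n) (y : ℝ) :
    |f y - f s| ≤ K * |y - s| ^ (n + 1) := by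
  have hK : 0 ≤ K := by simpa using (abs_nonneg _).trans (hf' (s + 1))
  have hbound : ∀ z ∈ Metric.closedBall s |y - s|, ‖f' z‖ ≤ K * |y - s| ^ n := fun z hz =>
    (hf' z).trans (by rw [Metric.mem_closedBall, Real.dist_eq] at hz; gcongr)
  have := (convex_closedBall s |y - s|).norm_image_sub_le_of_norm_hasDerivWithin_le
    (fun z _ => (hf z).hasDerivWithinAt) hbound (Metric.mem_closedBall_self (abs_nonneg _))
    (x := s) (y := y) (by simp [Real.dist_eq])
  simpa only [Real.norm_eq_abs, pow_succ, mul_assoc] using this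

theorem hasDerivAt_log_cosh (y : ℝ) : HasDerivAt (fun z => log (cosh z)) (tanh y) y := by
  simpa only [tanh_eq_sinh_div_cosh] using (hasDerivAt_cosh y).log (cosh_pos y).ne'

theorem hasDerivAt_tanh (y : ℝ) : HasDerivAt tanh (cosh y ^ 2)⁻¹ y := by
  rw [show tanh = fun z => sinh z / cosh z from funext tanh_eq_sinh_div_cosh]
  refine ((hasDerivAt_sinh y).div (hasDerivAt_cosh y) (cosh_pos y).ne').congr_deriv ?_
  rw [inv_eq_one_div, ← cosh_sq_sub_sinh_sq y]
  ring

theorem hasDerivAt_inv_cosh_sq (y : ℝ) :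
    HasDerivAt (fun z => (cosh z ^ 2)⁻¹) (-2 * tanh y * (cosh y ^ 2)⁻¹) y := by
  have hc := (cosh_pos y).ne'
  refine (((hasDerivAt_cosh y).pow 2).inv (pow_ne_zero 2 hc)).congr_deriv ?_
  rw [tanh_eq_sinh_div_cosh]
  simp only [Pi.pow_apply]
  field_simp
  ring

theorem inv_cosh_sq_le_one (y : ℝ) : (cosh y ^ 2)⁻¹ ≤ 1 :=
  inv_le_one_of_one_le₀ (one_le_pow₀ (one_le_cosh y))

theorem abs_inv_cosh_sq_sub_le (s y : ℝ) :
    |(cosh y ^ 2)⁻¹ - (cosh s ^ 2)⁻¹| ≤ 2 * |y - s| := by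
  have hbound (z : ℝ) : |-2 * tanh z * (cosh z ^ 2)⁻¹| ≤ 2 * |z - s| ^ 0 := by
    rw [pow_zero, mul_one, abs_mul, abs_mul, abs_of_pos (inv_pos.2 (pow_pos (cosh_pos z) 2))]
    have := (abs_tanh_lt_one z).le
    have := inv_cosh_sq_le_one z
    norm_num
    nlinarith [abs_nonneg (tanh z)]
  simpa using
    abs_sub_le_mul_abs_sub_pow (f := fun z => (cosh z ^ 2)⁻¹) hasDerivAt_inv_cosh_sq hbound y

noncomputable def logCoshBregman (s y : ℝ) : ℝ := log (cosh y) - log (cosh s) - tanh s * (y - s)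

theorem hasDerivAt_logCoshBregman (s y : ℝ) :
    HasDerivAt (logCoshBregman s) (tanh y - tanh s) y :=
  (((hasDerivAt_log_cosh y).sub_const _).sub
    (((hasDerivAt_id y).sub_const s).const_mul (tanh s))).congr_deriv (by simp)

theorem abs_logCoshBregman_le (s y : ℝ) : |logCoshBregman s y| ≤ 2 * |y - s| := by
  have hbound (z : ℝ) : |tanh z - tanh s| ≤ 2 * |z - s| ^ 0 := by
    rw [pow_zero, mul_one]
    linarith [abs_sub (tanh z) (tanh s), abs_tanh_lt_one z, abs_tanh_lt_one s]
  simpa [logCoshBregman] using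
    abs_sub_le_mul_abs_sub_pow (hasDerivAt_logCoshBregman s) hbound y

theorem abs_tanh_sub_tanh_sub_le (s y : ℝ) :
    |tanh y - tanh s - (cosh s ^ 2)⁻¹ * (y - s)| ≤ 2 * |y - s| ^ 2 := by
  have := abs_sub_le_mul_abs_sub_pow (n := 1) (f := fun z => tanh z - (cosh s ^ 2)⁻¹ * (z - s))
    (fun z => (hasDerivAt_tanh z).sub (((hasDerivAt_id z).sub_const s).const_mul _))
    (fun z => by simpa using abs_inv_cosh_sq_sub_le s z) y
  simpa [sub_right_comm] using this

theorem abs_logCoshBregman_sub_le (s y : ℝ) :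
    |logCoshBregman s y - (cosh s ^ 2)⁻¹ * (y - s) ^ 2 / 2| ≤ 2 * |y - s| ^ 3 := by
  have hd (z : ℝ) : HasDerivAt (fun z => logCoshBregman s z - (cosh s ^ 2)⁻¹ * (z - s) ^ 2 / 2)
      (tanh z - tanh s - (cosh s ^ 2)⁻¹ * (z - s)) z := by
    refine ((hasDerivAt_logCoshBregman s z).sub
      ((((hasDerivAt_id z).sub_const s).pow 2).const_mul _ |>.div_const 2)).congr_deriv ?_
    simp only [id, Nat.cast_ofNat]
    ring
  simpa [logCoshBregman] using
    abs_sub_le_mul_abs_sub_pow hd (fun z => abs_tanh_sub_tanh_sub_le s z) y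

theorem inv_cosh_sq_mul_sq_lt_logCoshBregman_zero {s : ℝ} (hs : s ≠ 0) :
    (cosh s ^ 2)⁻¹ * s ^ 2 / 2 < logCoshBregman s 0 := by
  set h : ℝ → ℝ := fun z => z * tanh z - log (cosh z) - (cosh z ^ 2)⁻¹ * z ^ 2 / 2
  have hd (z : ℝ) : HasDerivAt h (z ^ 2 * tanh z * (cosh z ^ 2)⁻¹) z := by
    refine ((((hasDerivAt_id z).mul (hasDerivAt_tanh z)).sub (hasDerivAt_log_cosh z)).sub
      (((hasDerivAt_inv_cosh_sq z).mul ((hasDerivAt_id z).pow 2)).div_const 2)).congr_deriv ?_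
    simp only [id, Pi.pow_apply, Nat.cast_ofNat]
    ring
  have hmono : StrictMonoOn h (Ici 0) := by
    refine strictMonoOn_of_deriv_pos (convex_Ici 0)
      (fun z _ => (hd z).continuousAt.continuousWithinAt) fun z hz => ?_
    rw [interior_Ici, mem_Ioi] at hz
    rw [(hd z).deriv]
    have : 0 < tanh z := by
      rw [tanh_eq_sinh_div_cosh]; exact div_pos (sinh_pos_iff.2 hz) (cosh_pos z)
    positivity
  have h_even (z : ℝ) : h |z| = h z := by
    rcases abs_choice z with hz | hz <;> rw [hz]
    simp only [h, tanh_neg, cosh_neg, neg_mul_neg, neg_sq]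
  have h0 : h 0 = 0 := by simp [h]
  have := hmono self_mem_Ici (abs_nonneg s) (abs_pos.2 hs)
  rw [h_even, h0] at this
  simp only [logCoshBregman, cosh_zero, log_one, h] at this ⊢
  linarith

theorem integral_Ioi_mul_exp_neg_mul_sq {b : ℝ} (hb : 0 < b) :
    ∫ v in Ioi 0, v * exp (-b * v ^ 2) = (2 * b)⁻¹ := by
  have hd : ∀ v ∈ Ici (0 : ℝ), HasDerivAt (fun v => -(2 * b)⁻¹ * exp (-b * v ^ 2))
      (v * exp (-b * v ^ 2)) v := fun v _ => by
    refine ((((hasDerivAt_pow 2 v).const_mul (-b)).exp).const_mul _).congr_deriv ?_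
    field_simp
    ring
  have hlim :
      Tendsto (fun v : ℝ => -(2 * b)⁻¹ * exp (-b * v ^ 2)) atTop (nhds (-(2 * b)⁻¹ * 0)) :=
    (tendsto_exp_atBot.comp
      ((tendsto_pow_atTop two_ne_zero).const_mul_atTop_of_neg (neg_lt_zero.2 hb))).const_mul _
  rw [integral_Ioi_of_hasDerivAt_of_tendsto' hd (integrable_mul_exp_neg_mul_sq hb).integrableOn
    hlim]
  simp

theorem integral_abs_sub_mul_exp_neg_mul_sq {b : ℝ} (hb : 0 < b) (s : ℝ) :
    ∫ y, |y - s| * exp (-b * (y - s) ^ 2) = b⁻¹ := by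
  rw [integral_sub_right_eq_self (fun u => |u| * exp (-b * u ^ 2)) s]
  have he : (fun u : ℝ => |u| * exp (-b * u ^ 2)) = fun u => |u| * exp (-b * |u| ^ 2) := by
    simp only [sq_abs]
  rw [he, integral_comp_abs (f := fun v => v * exp (-b * v ^ 2)),
    integral_Ioi_mul_exp_neg_mul_sq hb]
  field_simp

theorem integrable_abs_sub_mul_exp_neg_mul_sq {b : ℝ} (hb : 0 < b) (s : ℝ) :
    Integrable fun y => |y - s| * exp (-b * (y - s) ^ 2) := by
  have := ((integrable_mul_exp_neg_mul_sq hb).abs).comp_sub_right s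
  simpa only [abs_mul, abs_of_pos (exp_pos _)] using this

theorem integral_mul_exp_div_integral_exp_sub_const (f g : ℝ → ℝ) (n k : ℝ) :
    (∫ y, g y * exp (-n * (f y - k))) / (∫ y, exp (-n * (f y - k)))
      = (∫ y, g y * exp (-n * f y)) / ∫ y, exp (-n * f y) := by
  have hsplit (y : ℝ) : exp (-n * (f y - k)) = exp (n * k) * exp (-n * f y) := by
    rw [← exp_add]; ring_nf
  simp_rw [hsplit, mul_left_comm (g _), integral_const_mul]
  exact mul_div_mul_left _ _ (exp_pos _).ne'

theorem le_integral_exp_neg_mul {G : ℝ → ℝ} {s A n : ℝ} (hn : 1 ≤ n)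
    (hup : ∀ y, |y - s| ≤ 1 → G y ≤ A * (y - s) ^ 2)
    (hint : Integrable fun y => exp (-n * G y)) (hA : 0 ≤ A) :
    2 * exp (-A) / √n ≤ ∫ y, exp (-n * G y) := by
  set r := (√n)⁻¹
  have hsqrt : 1 ≤ √n := one_le_sqrt.2 hn
  have hr : 0 < r := by positivity
  have hr1 : r ≤ 1 := inv_le_one_of_one_le₀ hsqrt
  have hnr : n * r ^ 2 = 1 := by
    rw [inv_pow, sq_sqrt (by linarith)]; field_simp
  have hball : ∀ y ∈ Icc (s - r) (s + r), exp (-A) ≤ exp (-n * G y) := fun y hy => by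
    have hys : |y - s| ≤ r := abs_sub_le_iff.2 ⟨by linarith [hy.2], by linarith [hy.1]⟩
    have : n * G y ≤ A := calc
      n * G y ≤ n * (A * (y - s) ^ 2) :=
        mul_le_mul_of_nonneg_left (hup y (hys.trans hr1)) (by linarith)
      _ ≤ n * (A * r ^ 2) := by rw [← sq_abs (y - s)]; gcongr
      _ = A := by linear_combination A * hnr
    gcongr; linarith
  calc 2 * exp (-A) / √n = exp (-A) * volume.real (Icc (s - r) (s + r)) := by
        rw [volume_real_Icc_of_le (by linarith)]; ring
    _ ≤ ∫ y in Icc (s - r) (s + r), exp (-n * G y) :=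
        setIntegral_ge_of_const_le_real measurableSet_Icc (by simp) hball hint.integrableOn
    _ ≤ ∫ y, exp (-n * G y) :=
        setIntegral_le_integral hint (Eventually.of_forall fun y => (exp_pos _).le)

theorem exp_neg_mul_le_of_mul_sq_le {G : ℝ → ℝ} {s c n : ℝ} (hn : 0 ≤ n)
    (hlow : ∀ y, c * (y - s) ^ 2 ≤ G y) (y : ℝ) :
    exp (-n * G y) ≤ exp (-(n * c) * (y - s) ^ 2) := by
  rw [exp_le_exp]
  nlinarith [mul_le_mul_of_nonneg_left (hlow y) hn]

theorem integrable_mul_exp_neg_mul {G g : ℝ → ℝ} {s c n a b : ℝ} (hG : Continuous G)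
    (hg : Continuous g) (hc : 0 < c) (hn : 0 < n) (hlow : ∀ y, c * (y - s) ^ 2 ≤ G y)
    (hgs : ∀ y, |g y| ≤ a + b * |y - s|) :
    Integrable fun y => g y * exp (-n * G y) := by
  have hnc := mul_pos hn hc
  refine ((((integrable_exp_neg_mul_sq hnc).comp_sub_right s).const_mul a).add
    ((integrable_abs_sub_mul_exp_neg_mul_sq hnc s).const_mul b)).mono' (by fun_prop)
    (Eventually.of_forall fun y => ?_)
  rw [Pi.add_apply, norm_mul, norm_of_nonneg (exp_pos _).le, ← mul_assoc, ← add_mul]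
  exact mul_le_mul (hgs y) (exp_neg_mul_le_of_mul_sq_le hn.le hlow y) (exp_pos _).le
    ((abs_nonneg _).trans (hgs y))

theorem abs_integral_mul_exp_neg_mul_le {G g : ℝ → ℝ} {s c n L : ℝ} (hc : 0 < c)
    (hn : 0 < n) (hlow : ∀ y, c * (y - s) ^ 2 ≤ G y) (hgs : ∀ y, |g y| ≤ L * |y - s|) :
    |∫ y, g y * exp (-n * G y)| ≤ L * (n * c)⁻¹ := by
  have hnc := mul_pos hn hc
  have hL : 0 ≤ L := by simpa using (abs_nonneg _).trans (hgs (s + 1))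
  rw [← Real.norm_eq_abs]
  refine (norm_integral_le_of_norm_le
    ((integrable_abs_sub_mul_exp_neg_mul_sq hnc s).const_mul L)
    (Eventually.of_forall fun y => ?_)).trans_eq ?_
  · rw [norm_mul, norm_of_nonneg (exp_pos _).le, ← mul_assoc]
    exact mul_le_mul (hgs y) (exp_neg_mul_le_of_mul_sq_le hn.le hlow y) (exp_pos _).le
      (by positivity)
  · rw [integral_const_mul, integral_abs_sub_mul_exp_neg_mul_sq hnc s]

theorem abs_integral_mul_exp_div_integral_exp_sub_le {f g : ℝ → ℝ} {s c A L n : ℝ}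
    (hf : Continuous f) (hg : Continuous g) (hc : 0 < c) (hn : 1 ≤ n)
    (hlow : ∀ y, c * (y - s) ^ 2 ≤ f y - f s)
    (hup : ∀ y, |y - s| ≤ 1 → f y - f s ≤ A * (y - s) ^ 2)
    (hgs : ∀ y, |g y - g s| ≤ L * |y - s|) :
    |(∫ y, g y * exp (-n * f y)) / (∫ y, exp (-n * f y)) - g s|
      ≤ L * exp A / (2 * c) / √n := by
  rw [← integral_mul_exp_div_integral_exp_sub_const f g n (f s)]
  have hn0 : 0 < n := by linarith
  have hA : 0 ≤ A := by nlinarith [hlow (s + 1), hup (s + 1) (by simp)]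
  have hG : Continuous fun y => f y - f s := by fun_prop
  have he_int : Integrable fun y => exp (-n * (f y - f s)) := by
    simpa using integrable_mul_exp_neg_mul (g := 1) (a := 1) (b := 0) hG continuous_const hc
      hn0 hlow (by simp)
  have hge_int := integrable_mul_exp_neg_mul (a := |g s|) (b := L) hG hg hc hn0 hlow fun y => by
    linarith [abs_sub_abs_le_abs_sub (g y) (g s), hgs y]
  have hdev := abs_integral_mul_exp_neg_mul_le (g := fun y => g y - g s) hc hn0 hlow hgs
  have hZ := le_integral_exp_neg_mul hn hup he_int hA
  have hZpos : 0 < ∫ y, exp (-n * (f y - f s)) := lt_of_lt_of_le (by positivity) hZ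
  have hcentered : (∫ y, g y * exp (-n * (f y - f s))) / (∫ y, exp (-n * (f y - f s))) - g s
      = (∫ y, (g y - g s) * exp (-n * (f y - f s))) / ∫ y, exp (-n * (f y - f s)) := by
    rw [eq_div_iff hZpos.ne', sub_mul, div_mul_cancel₀ _ hZpos.ne']
    simp_rw [sub_mul]
    rw [integral_sub hge_int (he_int.const_mul _), integral_const_mul, mul_comm]
  rw [hcentered, abs_div, abs_of_pos hZpos]
  calc _ ≤ L * (n * c)⁻¹ / (2 * exp (-A) / √n) :=
        div_le_div₀ ((abs_nonneg _).trans hdev) hdev (by positivity) hZ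
    _ = L * exp A / (2 * c) / √n := by
        rw [exp_neg]
        field_simp
        rw [sq_sqrt hn0.le]

theorem exists_pos_mul_sq_le_of_near_of_far {G : ℝ → ℝ} {s δ R c₁ c₂ : ℝ}
    (hG : Continuous G) (hδ : 0 < δ) (hc₁ : 0 < c₁) (hc₂ : 0 < c₂)
    (hpos : ∀ y, y ≠ s → 0 < G y)
    (hnear : ∀ y, |y - s| ≤ δ → c₁ * (y - s) ^ 2 ≤ G y)
    (hfar : ∀ y, R ≤ |y - s| → c₂ * (y - s) ^ 2 ≤ G y) :
    ∃ c, 0 < c ∧ ∀ y, c * (y - s) ^ 2 ≤ G y := by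
  -- the radius `max R δ` rather than `R` keeps `K` nonempty
  set K := {y | δ ≤ |y - s|} ∩ Metric.closedBall s (max R δ)
  have hK : IsCompact K :=
    (isCompact_closedBall _ _).inter_left (isClosed_le continuous_const (by fun_prop))
  have hK_pos : ∀ y ∈ K, 0 < (y - s) ^ 2 := fun y hy => by
    rw [← sq_abs]; exact pow_pos (hδ.trans_le hy.1) 2
  have hK_ne : K.Nonempty := ⟨s + δ, by simp [K, abs_of_pos hδ]⟩
  obtain ⟨y₀, hy₀, hmin⟩ := hK.exists_isMinOn hK_ne
    (hG.continuousOn.div (by fun_prop) fun y hy => (hK_pos y hy).ne')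
  set m := G y₀ / (y₀ - s) ^ 2
  have hm : 0 < m :=
    div_pos (hpos y₀ fun h => by simpa [h] using hK_pos y₀ hy₀) (hK_pos y₀ hy₀)
  refine ⟨min c₁ (min c₂ m), by positivity, fun y => ?_⟩
  rcases le_or_gt |y - s| δ with hy_near | hy_near
  · exact (mul_le_mul_of_nonneg_right (min_le_left _ _) (sq_nonneg _)).trans (hnear y hy_near)
  rcases le_or_gt (max R δ) |y - s| with hy_far | hy_far
  · refine (mul_le_mul_of_nonneg_right ?_ (sq_nonneg _)).trans
      (hfar y ((le_max_left _ _).trans hy_far))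
    exact (min_le_right _ _).trans (min_le_left _ _)
  have hyK : y ∈ K :=
    ⟨hy_near.le, by rw [Metric.mem_closedBall, Real.dist_eq]; exact hy_far.le⟩
  calc min c₁ (min c₂ m) * (y - s) ^ 2 ≤ m * (y - s) ^ 2 := by
        gcongr; exact (min_le_right _ _).trans (min_le_right _ _)
    _ ≤ G y := (le_div_iff₀ (hK_pos y hyK)).1 (hmin hyK)

noncomputable def cwFreeEnergy (x t y : ℝ) : ℝ := (x - y) ^ 2 / (2 * t) - log 2 - log (cosh y)

theorem continuous_cwFreeEnergy (x t : ℝ) : Continuous (cwFreeEnergy x t) := by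
  unfold cwFreeEnergy
  have := continuous_cosh.log fun z => (cosh_pos z).ne'
  fun_prop

theorem hasDerivAt_cwFreeEnergy (x t y : ℝ) :
    HasDerivAt (cwFreeEnergy x t) ((y - x) / t - tanh y) y := by
  refine (((((hasDerivAt_id y).const_sub x).pow 2).div_const (2 * t)).sub_const (log 2) |>.sub
    (hasDerivAt_log_cosh y)).congr_deriv ?_
  simp only [id, Nat.cast_ofNat]
  ring

section Minimizer

variable {x t s : ℝ}

theorem tanh_eq_of_forall_cwFreeEnergy_le
    (hmin : ∀ z, cwFreeEnergy x t s ≤ cwFreeEnergy x t z) : tanh s = (s - x) / t := by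
  have := (show IsLocalMin (cwFreeEnergy x t) s from Eventually.of_forall hmin).hasDerivAt_eq_zero
    (hasDerivAt_cwFreeEnergy x t s)
  linarith

theorem cwFreeEnergy_sub_eq (hmin : ∀ z, cwFreeEnergy x t s ≤ cwFreeEnergy x t z) (y : ℝ) :
    cwFreeEnergy x t y - cwFreeEnergy x t s = (y - s) ^ 2 / (2 * t) - logCoshBregman s y := by
  simp only [cwFreeEnergy, logCoshBregman, tanh_eq_of_forall_cwFreeEnergy_le hmin]
  ring

theorem cwFreeEnergy_sub_le (hmin : ∀ z, cwFreeEnergy x t s ≤ cwFreeEnergy x t z) {y : ℝ}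
    (hy : |y - s| ≤ 1) :
    cwFreeEnergy x t y - cwFreeEnergy x t s ≤ ((2 * t)⁻¹ + 2) * (y - s) ^ 2 := by
  have hD := (abs_le.1 (abs_logCoshBregman_sub_le s y)).1
  have hcube : |y - s| ^ 3 ≤ (y - s) ^ 2 := by
    rw [pow_succ, sq_abs]; exact mul_le_of_le_one_right (sq_nonneg _) hy
  have : 0 ≤ (cosh s ^ 2)⁻¹ * (y - s) ^ 2 := by positivity
  rw [cwFreeEnergy_sub_eq hmin]
  linarith [show (y - s) ^ 2 / (2 * t) = (2 * t)⁻¹ * (y - s) ^ 2 by ring]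

theorem inv_cosh_sq_lt_inv (hmin : ∀ z, cwFreeEnergy x t s ≤ cwFreeEnergy x t z)
    (hdeg : ¬(t = 1 ∧ x = 0)) : (cosh s ^ 2)⁻¹ < t⁻¹ := by
  have hG (y : ℝ) : 0 ≤ (y - s) ^ 2 / (2 * t) - logCoshBregman s y := by
    rw [← cwFreeEnergy_sub_eq hmin]; linarith [hmin y]
  rcases lt_trichotomy (cosh s ^ 2)⁻¹ t⁻¹ with h | h | h
  · exact h
  · by_cases hs : s = 0
    · subst hs
      have ht : t = 1 := by simpa using h.symm
      have := tanh_eq_of_forall_cwFreeEnergy_le hmin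
      simp only [tanh_zero, ht, div_one] at this
      exact absurd ⟨ht, by linarith⟩ hdeg
    · have := hG 0
      have := inv_cosh_sq_mul_sq_lt_logCoshBregman_zero hs
      rw [h] at this
      linarith [show (0 - s) ^ 2 / (2 * t) = t⁻¹ * s ^ 2 / 2 by ring]
  · set ε := ((cosh s ^ 2)⁻¹ - t⁻¹) / 8
    have hε : 0 < ε := by simp only [ε]; linarith
    have := hG (s + ε)
    have hD := (abs_le.1 (abs_logCoshBregman_sub_le s (s + ε))).1
    simp only [add_sub_cancel_left, abs_of_pos hε] at this hD
    have hexpand : (cosh s ^ 2)⁻¹ * ε ^ 2 / 2 = t⁻¹ * ε ^ 2 / 2 + 4 * ε ^ 3 := by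
      simp only [ε]; ring
    linarith [pow_pos hε 3, show ε ^ 2 / (2 * t) = t⁻¹ * ε ^ 2 / 2 by ring]

theorem exists_pos_mul_sq_le_cwFreeEnergy_sub
    (hmin : ∀ z, cwFreeEnergy x t s ≤ cwFreeEnergy x t z) (ht : 0 < t)
    (huniq : ∀ y, (∀ z, cwFreeEnergy x t y ≤ cwFreeEnergy x t z) → y = s)
    (hdeg : ¬(t = 1 ∧ x = 0)) :
    ∃ c, 0 < c ∧ ∀ y, c * (y - s) ^ 2 ≤ cwFreeEnergy x t y - cwFreeEnergy x t s := by
  set κ := t⁻¹ - (cosh s ^ 2)⁻¹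
  have hκ : 0 < κ := sub_pos.2 (inv_cosh_sq_lt_inv hmin hdeg)
  have hhalf (y : ℝ) : (y - s) ^ 2 / (2 * t) = t⁻¹ * (y - s) ^ 2 / 2 := by ring
  refine exists_pos_mul_sq_le_of_near_of_far (δ := κ / 8) (R := 8 * t) (c₁ := κ / 4)
    (c₂ := (4 * t)⁻¹)
    ((continuous_cwFreeEnergy x t).sub continuous_const) (by positivity) (by positivity)
    (by positivity) (fun y hy => ?_) (fun y hy => ?_) (fun y hy => ?_)
  · refine (sub_nonneg.2 (hmin y)).lt_of_ne fun h => hy (huniq y fun z => ?_)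
    linarith [hmin z]
  · have hD := (abs_le.1 (abs_logCoshBregman_sub_le s y)).2
    have hcube : 2 * |y - s| ^ 3 ≤ κ / 4 * (y - s) ^ 2 := by
      rw [pow_succ, sq_abs]; nlinarith [sq_nonneg (y - s)]
    rw [cwFreeEnergy_sub_eq hmin, hhalf]
    linarith
  · have hD := (abs_le.1 (abs_logCoshBregman_le s y)).2
    have hlin : 2 * |y - s| ≤ (4 * t)⁻¹ * (y - s) ^ 2 := calc
      2 * |y - s| = (4 * t)⁻¹ * (8 * t * |y - s|) := by field_simp; ring
      _ ≤ (4 * t)⁻¹ * (y - s) ^ 2 := by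
        gcongr; rw [← sq_abs]; nlinarith [abs_nonneg (y - s)]
    rw [cwFreeEnergy_sub_eq hmin]
    linarith [show (y - s) ^ 2 / (2 * t) = 2 * ((4 * t)⁻¹ * (y - s) ^ 2) by field_simp; ring]

end Minimizer

theorem integral_eq_zero_of_odd {f : ℝ → ℝ} (hf : ∀ y, f (-y) = -f y) : ∫ y, f y = 0 := by
  have := integral_neg_eq_self f volume
  simp only [hf, integral_neg] at this
  linarith

theorem cwFreeEnergy_zero_one_neg (y : ℝ) : cwFreeEnergy 0 1 (-y) = cwFreeEnergy 0 1 y := by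
  simp [cwFreeEnergy]

theorem cwVelocity_converges (x t : ℝ) (ht : 0 < t) (ystar : ℝ)
    (hmin : ∀ z : ℝ, (x - ystar) ^ 2 / (2 * t) - Real.log 2 - Real.log (Real.cosh ystar)
      ≤ (x - z) ^ 2 / (2 * t) - Real.log 2 - Real.log (Real.cosh z))
    (huniq : ∀ y' : ℝ,
      (∀ z : ℝ, (x - y') ^ 2 / (2 * t) - Real.log 2 - Real.log (Real.cosh y')
        ≤ (x - z) ^ 2 / (2 * t) - Real.log 2 - Real.log (Real.cosh z)) → y' = ystar) :
    ∃ C : ℝ, 0 < C ∧ ∀ N : ℕ, 1 ≤ N →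
      |(∫ y : ℝ, ((x - y) / t) * Real.exp
            (-(N : ℝ) * ((x - y) ^ 2 / (2 * t) - Real.log 2 - Real.log (Real.cosh y))))
        / (∫ y : ℝ, Real.exp
            (-(N : ℝ) * ((x - y) ^ 2 / (2 * t) - Real.log 2 - Real.log (Real.cosh y))))
        - (x - ystar) / t|
      ≤ C / Real.sqrt N := by
  by_cases hdeg : t = 1 ∧ x = 0
  · obtain ⟨rfl, rfl⟩ := hdeg
    have hs : ystar = 0 := by
      have := huniq (-ystar) fun z => (cwFreeEnergy_zero_one_neg ystar).trans_le (hmin z)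
      linarith
    refine ⟨1, one_pos, fun N _ => ?_⟩
    rw [integral_eq_zero_of_odd fun y => ?_, hs]
    · simp
    · have := cwFreeEnergy_zero_one_neg y
      simp only [cwFreeEnergy] at this
      rw [this]
      ring
  · obtain ⟨c, hc, hlow⟩ := exists_pos_mul_sq_le_cwFreeEnergy_sub hmin ht huniq hdeg
    refine ⟨t⁻¹ * exp ((2 * t)⁻¹ + 2) / (2 * c), by positivity, fun N hN => ?_⟩
    refine abs_integral_mul_exp_div_integral_exp_sub_le (f := cwFreeEnergy x t)
      (g := fun y => (x - y) / t) (continuous_cwFreeEnergy x t) (by fun_prop) hc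
      (by exact_mod_cast hN) hlow (fun y => cwFreeEnergy_sub_le hmin) fun y => ?_
    rw [div_sub_div_same, sub_sub_sub_cancel_left, abs_div, abs_of_pos ht, abs_sub_comm,
      inv_mul_eq_div]
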